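/- False theta identity: Σ_{n≥0} (-1)^n q^{n(n+1)} / (-q^2;q^2)_{n+1} = 1 + 2 Σ_{n≥1} q^{3n^2}(q^n − q^{-n}), for |q|<1. -/

import Mathlib

/-!
Put `p = q²` and consider, as functions of `t`,
`L(t) = ∑ₘ (-1)ᵐ p^(m choose 2) tᵐ / (-p;p)ₘ` and
`R(t) = ∑ₙ (-t;p)ₙ tⁿ p^(n(3n-1)/2) (1 - t p²ⁿ) / (-p;p)ₙ`.
Both satisfy `F(t) = 2 - (1 + t) F(tp)`: for `L` termwise, for `R` because, with `uₙ(t)` its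
`n`-th term, `uₙ(t) + (1 + t) uₙ(tp)` telescopes. Both are continuous at `0`, so their difference
`D` satisfies `D(t) = (-1)ᴺ (-t;p)_N D(tpᴺ)` with `(-t;p)_N` bounded in `N` and
`D(tpᴺ) → D(0) = 0`; hence `L = R`.
At `t = 1` the series `L(1)` is `1` minus the left-hand side, while `R(1)` is `-2` times the
right-hand series, since `(-1;p)ₙ₊₁ = 2 (-p;p)ₙ`.
-/

open scoped BigOperators

/-- finite q-Pochhammer symbol `(x;q)_n = ∏_{j=0}^{n-1} (1 - x q^j)` -/
noncomputable def qPoch (x q : ℂ) (n : ℕ) : ℂ := ∏ j ∈ Finset.range n, (1 - x * q ^ j)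

/-- infinite q-Pochhammer symbol `(x;q)_∞ = ∏_{j≥0} (1 - x q^j)` -/
noncomputable def qPochInf (x q : ℂ) : ℂ := ∏' j : ℕ, (1 - x * q ^ j)

/-- Gaussian binomial coefficient in base q, zero outside `0 ≤ k ≤ m`. -/
noncomputable def qbinom (q : ℂ) (m k : ℤ) : ℂ :=
  if 0 ≤ k ∧ k ≤ m then
    qPoch q q m.toNat / (qPoch q q k.toNat * qPoch q q (m - k).toNat)
  else 0

open Filter Topology

theorem Nat.choose_two_succ (n : ℕ) : (n + 1).choose 2 = n.choose 2 + n := by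
  rw [Nat.choose_succ_succ', Nat.choose_one_right, add_comm]

theorem Nat.two_mul_choose_two_succ (n : ℕ) : 2 * (n + 1).choose 2 = n * (n + 1) := by
  induction n with
  | zero => rfl
  | succ n ih => rw [Nat.choose_two_succ, mul_add, ih]; ring

theorem pentagonal_natCast_succ (n : ℕ) :
    pentagonal ((n + 1 : ℕ) : ℤ) = pentagonal (n : ℤ) + (3 * n + 1) := by
  have h₁ := two_mul_natCast_pentagonal ((n + 1 : ℕ) : ℤ)
  have h₀ := two_mul_natCast_pentagonal (n : ℤ)
  push_cast at h₁ ⊢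
  have : (2 : ℤ) * pentagonal ((n : ℤ) + 1) = 2 * (pentagonal (n : ℤ) + (3 * n + 1)) := by
    linear_combination h₁ - h₀
  omega

theorem pentagonal_natCast (n : ℕ) : pentagonal (n : ℤ) = 3 * n.choose 2 + n := by
  induction n with
  | zero => decide
  | succ n ih =>
    rw [pentagonal_natCast_succ, ih, Nat.choose_two_succ]
    ring

theorem three_mul_sq_sub_eq_two_mul_pentagonal (m : ℕ) : 3 * m ^ 2 - m = 2 * pentagonal m := by
  have h := two_mul_natCast_pentagonal m
  have hle : m ≤ 3 * m ^ 2 := by nlinarith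
  zify [hle]
  linear_combination -h

theorem summable_pow_mul_pow_choose_two {r : ℝ} (hr₀ : 0 ≤ r) (hr : r < 1) (x : ℝ) :
    Summable fun n : ℕ => x ^ n * r ^ n.choose 2 := by
  have hlim : Tendsto (fun n : ℕ => |x| * r ^ n) atTop (𝓝 0) := by
    simpa using (tendsto_pow_atTop_nhds_zero_of_lt_one hr₀ hr).const_mul |x|
  refine summable_of_ratio_norm_eventually_le (r := 1 / 2) (by norm_num) ?_
  filter_upwards [hlim.eventually (gt_mem_nhds (by norm_num : (0 : ℝ) < 1 / 2))] with n hn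
  calc ‖x ^ (n + 1) * r ^ (n + 1).choose 2‖ = |x| * r ^ n * ‖x ^ n * r ^ n.choose 2‖ := by
        simp only [Nat.choose_two_succ, Real.norm_eq_abs, abs_mul, abs_pow, abs_of_nonneg hr₀,
          pow_succ, pow_add]
        ring
    _ ≤ 1 / 2 * ‖x ^ n * r ^ n.choose 2‖ := by gcongr

section QPoch

variable {x p : ℂ}

theorem qPoch_zero (x p : ℂ) : qPoch x p 0 = 1 := Finset.prod_range_zero _

theorem qPoch_succ (x p : ℂ) (n : ℕ) : qPoch x p (n + 1) = qPoch x p n * (1 - x * p ^ n) :=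
  Finset.prod_range_succ _ n

theorem qPoch_succ' (x p : ℂ) (n : ℕ) : qPoch x p (n + 1) = (1 - x) * qPoch (x * p) p n := by
  simp only [qPoch, Finset.prod_range_succ', pow_succ, pow_zero, mul_one, mul_assoc, mul_comm]

theorem qPoch_neg_self_succ (p : ℂ) (n : ℕ) :
    qPoch (-p) p (n + 1) = qPoch (-p) p n * (1 + p ^ (n + 1)) := by
  rw [qPoch_succ, neg_mul, sub_neg_eq_add, ← pow_succ']

@[fun_prop]
theorem continuous_qPoch (p : ℂ) (n : ℕ) : Continuous fun x => qPoch x p n := by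
  unfold qPoch; fun_prop

theorem norm_one_sub_mul_pow_le (hp : ‖p‖ ≤ 1) (j : ℕ) :
    ‖1 - x * p ^ j‖ ≤ 1 + ‖x‖ := by
  calc ‖1 - x * p ^ j‖ ≤ 1 + ‖x‖ * ‖p‖ ^ j := by
        simpa [norm_pow] using norm_sub_le (1 : ℂ) (x * p ^ j)
    _ ≤ 1 + ‖x‖ := by
        gcongr
        exact mul_le_of_le_one_right (norm_nonneg x) (pow_le_one₀ (norm_nonneg p) hp)

theorem norm_qPoch_le (hp : ‖p‖ ≤ 1) (n : ℕ) : ‖qPoch x p n‖ ≤ (1 + ‖x‖) ^ n := by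
  calc ‖qPoch x p n‖ = ∏ j ∈ Finset.range n, ‖1 - x * p ^ j‖ := by rw [qPoch, norm_prod]
    _ ≤ ∏ _j ∈ Finset.range n, (1 + ‖x‖) :=
        Finset.prod_le_prod (fun _ _ => norm_nonneg _) fun j _ => norm_one_sub_mul_pow_le hp j
    _ = (1 + ‖x‖) ^ n := by simp

theorem norm_qPoch_le_exp (hp : ‖p‖ < 1) (n : ℕ) :
    ‖qPoch x p n‖ ≤ Real.exp (‖x‖ / (1 - ‖p‖)) := by
  have hgeom : HasSum (fun j => ‖x‖ * ‖p‖ ^ j) (‖x‖ / (1 - ‖p‖)) := by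
    simpa [div_eq_mul_inv] using (hasSum_geometric_of_lt_one (norm_nonneg p) hp).mul_left ‖x‖
  calc ‖qPoch x p n‖ ≤ ∏ j ∈ Finset.range n, Real.exp (‖x‖ * ‖p‖ ^ j) := by
        rw [qPoch, norm_prod]
        refine Finset.prod_le_prod (fun _ _ => norm_nonneg _) fun j _ => ?_
        calc ‖1 - x * p ^ j‖ ≤ ‖x‖ * ‖p‖ ^ j + 1 := by
              simpa [norm_pow, add_comm] using norm_sub_le (1 : ℂ) (x * p ^ j)
          _ ≤ _ := Real.add_one_le_exp _
    _ = Real.exp (∑ j ∈ Finset.range n, ‖x‖ * ‖p‖ ^ j) := (Real.exp_sum _ _).symm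
    _ ≤ Real.exp (‖x‖ / (1 - ‖p‖)) :=
        Real.exp_le_exp.2 <| (hgeom.summable.sum_le_tsum _ fun _ _ => by positivity).trans_eq
          hgeom.tsum_eq

theorem le_norm_qPoch (hx : ‖x‖ ≤ 1) (hp : ‖p‖ ≤ 1) (n : ℕ) :
    (1 - ‖x‖) ^ n ≤ ‖qPoch x p n‖ := by
  induction n with
  | zero => simp [qPoch_zero]
  | succ n ih =>
    rw [qPoch_succ, norm_mul, pow_succ]
    refine mul_le_mul ih ?_ (sub_nonneg.2 hx) (norm_nonneg _)
    calc 1 - ‖x‖ ≤ 1 - ‖x * p ^ n‖ := by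
          gcongr
          rw [norm_mul, norm_pow]
          exact mul_le_of_le_one_right (norm_nonneg x) (pow_le_one₀ (norm_nonneg p) hp)
      _ ≤ ‖1 - x * p ^ n‖ := by simpa using norm_sub_norm_le (1 : ℂ) (x * p ^ n)

theorem qPoch_ne_zero (hx : ‖x‖ < 1) (hp : ‖p‖ ≤ 1) (n : ℕ) : qPoch x p n ≠ 0 :=
  norm_pos_iff.1 <| (pow_pos (sub_pos.2 hx) n).trans_le (le_norm_qPoch hx.le hp n)

end QPoch
namespace FalseTheta

noncomputable def leftTerm (p t : ℂ) (m : ℕ) : ℂ :=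
  (-1) ^ m * p ^ m.choose 2 * t ^ m / qPoch (-p) p m

noncomputable def leftFun (p t : ℂ) : ℂ := ∑' m, leftTerm p t m

noncomputable def rightCore (p t : ℂ) (n : ℕ) : ℂ :=
  qPoch (-t) p n * t ^ n * p ^ pentagonal n / qPoch (-p) p n

noncomputable def rightTerm (p t : ℂ) (n : ℕ) : ℂ := rightCore p t n * (1 - t * p ^ (2 * n))

noncomputable def rightFun (p t : ℂ) : ℂ := ∑' n, rightTerm p t n

variable {p : ℂ}

theorem qPoch_neg_self_ne_zero (hp : ‖p‖ < 1) (n : ℕ) : qPoch (-p) p n ≠ 0 :=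
  qPoch_ne_zero (by rwa [norm_neg]) hp.le n

theorem one_add_pow_succ_ne_zero (hp : ‖p‖ < 1) (n : ℕ) : 1 + p ^ (n + 1) ≠ 0 :=
  right_ne_zero_of_mul (qPoch_neg_self_succ p n ▸ qPoch_neg_self_ne_zero hp (n + 1))

theorem norm_div_qPoch_neg_self_le (hp : ‖p‖ < 1) (z : ℂ) (n : ℕ) :
    ‖z / qPoch (-p) p n‖ ≤ ‖z‖ / (1 - ‖p‖) ^ n := by
  have h := le_norm_qPoch (x := -p) (by rw [norm_neg]; exact hp.le) hp.le n
  rw [norm_neg] at h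
  rw [norm_div]
  exact div_le_div_of_nonneg_left (norm_nonneg z) (pow_pos (sub_pos.2 hp) n) h

theorem norm_leftTerm_le (hp : ‖p‖ < 1) {t : ℂ} {ρ : ℝ} (ht : ‖t‖ ≤ ρ) (m : ℕ) :
    ‖leftTerm p t m‖ ≤ (ρ / (1 - ‖p‖)) ^ m * ‖p‖ ^ m.choose 2 := by
  have hc := sub_pos.2 hp
  have hρ := (norm_nonneg t).trans ht
  calc ‖leftTerm p t m‖ ≤ ‖p‖ ^ m.choose 2 * ‖t‖ ^ m / (1 - ‖p‖) ^ m := by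
        simpa [leftTerm, norm_mul, norm_pow] using
          norm_div_qPoch_neg_self_le hp ((-1) ^ m * p ^ m.choose 2 * t ^ m) m
    _ ≤ ‖p‖ ^ m.choose 2 * ρ ^ m / (1 - ‖p‖) ^ m := by gcongr
    _ = _ := by ring

theorem norm_rightCore_le (hp : ‖p‖ < 1) {t : ℂ} {ρ : ℝ} (ht : ‖t‖ ≤ ρ) (n : ℕ) :
    ‖rightCore p t n‖ ≤ ((1 + ρ) * ρ / (1 - ‖p‖)) ^ n * ‖p‖ ^ n.choose 2 := by
  have hc := sub_pos.2 hp
  have hρ := (norm_nonneg t).trans ht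
  have hpoch : ‖qPoch (-t) p n‖ ≤ (1 + ρ) ^ n :=
    (norm_qPoch_le hp.le n).trans (by rw [norm_neg]; gcongr)
  have hpow : ‖p‖ ^ pentagonal (n : ℤ) ≤ ‖p‖ ^ n.choose 2 :=
    pow_le_pow_of_le_one (norm_nonneg p) hp.le (by rw [pentagonal_natCast]; omega)
  calc ‖rightCore p t n‖
      ≤ ‖qPoch (-t) p n‖ * ‖t‖ ^ n * ‖p‖ ^ pentagonal (n : ℤ) / (1 - ‖p‖) ^ n := by
        simpa [rightCore, norm_mul, norm_pow] using
          norm_div_qPoch_neg_self_le hp (qPoch (-t) p n * t ^ n * p ^ pentagonal (n : ℤ)) n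
    _ ≤ (1 + ρ) ^ n * ρ ^ n * ‖p‖ ^ n.choose 2 / (1 - ‖p‖) ^ n := by gcongr
    _ = _ := by rw [div_pow, mul_pow]; ring

theorem norm_rightTerm_le (hp : ‖p‖ < 1) (t : ℂ) (n : ℕ) :
    ‖rightTerm p t n‖ ≤ ‖rightCore p t n‖ * (1 + ‖t‖) := by
  rw [rightTerm, norm_mul]
  gcongr
  exact norm_one_sub_mul_pow_le hp.le _

theorem summable_leftTerm (hp : ‖p‖ < 1) (t : ℂ) : Summable (leftTerm p t) :=
  .of_norm_bounded (summable_pow_mul_pow_choose_two (norm_nonneg p) hp _)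
    (norm_leftTerm_le hp le_rfl)

theorem summable_norm_rightCore (hp : ‖p‖ < 1) (t : ℂ) :
    Summable fun n => ‖rightCore p t n‖ :=
  .of_nonneg_of_le (fun _ => norm_nonneg _) (norm_rightCore_le hp le_rfl)
    (summable_pow_mul_pow_choose_two (norm_nonneg p) hp _)

theorem summable_rightTerm (hp : ‖p‖ < 1) (t : ℂ) : Summable (rightTerm p t) :=
  .of_norm_bounded ((summable_norm_rightCore hp t).mul_right _) (norm_rightTerm_le hp t)

theorem continuousAt_leftFun (hp : ‖p‖ < 1) : ContinuousAt (leftFun p) 0 := by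
  have hterm (m : ℕ) : Continuous fun t => leftTerm p t m := by unfold leftTerm; fun_prop
  have hcont : ContinuousOn (leftFun p) (Metric.closedBall 0 1) :=
    continuousOn_tsum (fun m => (hterm m).continuousOn)
      (summable_pow_mul_pow_choose_two (norm_nonneg p) hp _)
      fun m _ ht => norm_leftTerm_le hp (mem_closedBall_zero_iff.1 ht) m
  exact hcont.continuousAt (Metric.closedBall_mem_nhds 0 one_pos)

theorem continuousAt_rightFun (hp : ‖p‖ < 1) : ContinuousAt (rightFun p) 0 := by
  have hterm (n : ℕ) : Continuous fun t => rightTerm p t n := by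
    unfold rightTerm rightCore; fun_prop
  have hcont : ContinuousOn (rightFun p) (Metric.closedBall 0 1) :=
    continuousOn_tsum (fun n => (hterm n).continuousOn)
      ((summable_pow_mul_pow_choose_two (norm_nonneg p) hp ((1 + 1) * 1 / (1 - ‖p‖))).mul_right
        2)
      fun n t ht => by
        have ht := mem_closedBall_zero_iff.1 ht
        refine (norm_rightTerm_le hp t n).trans ?_
        gcongr
        · exact norm_rightCore_le hp ht n
        · linarith
  exact hcont.continuousAt (Metric.closedBall_mem_nhds 0 one_pos)

theorem leftTerm_zero (p t : ℂ) : leftTerm p t 0 = 1 := by simp [leftTerm, qPoch_zero]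

theorem leftTerm_succ (hp : ‖p‖ < 1) (t : ℂ) (k : ℕ) :
    leftTerm p t (k + 1) = -t * leftTerm p (t * p) k - leftTerm p (t * p) (k + 1) := by
  have h₁ := qPoch_neg_self_ne_zero hp k
  have h₂ := one_add_pow_succ_ne_zero hp k
  simp only [leftTerm, qPoch_neg_self_succ, Nat.choose_two_succ, mul_pow]
  field_simp
  ring

theorem leftFun_eq (hp : ‖p‖ < 1) (t : ℂ) :
    leftFun p t = 2 - (1 + t) * leftFun p (t * p) := by
  have hs := summable_leftTerm hp (t * p)
  have hs' : Summable fun k => leftTerm p (t * p) (k + 1) := (summable_nat_add_iff 1).2 hs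
  have hshift : leftFun p (t * p) = 1 + ∑' k, leftTerm p (t * p) (k + 1) := by
    rw [leftFun, hs.tsum_eq_zero_add, leftTerm_zero]
  rw [leftFun, (summable_leftTerm hp t).tsum_eq_zero_add, leftTerm_zero,
    tsum_congr (leftTerm_succ hp t), (hs.mul_left (-t)).tsum_sub hs', tsum_mul_left, ← leftFun,
    hshift]
  ring

theorem rightCore_zero (p t : ℂ) : rightCore p t 0 = 1 := by
  simp [rightCore, qPoch_zero, show pentagonal 0 = 0 by decide]

theorem one_add_mul_rightCore (p t : ℂ) (n : ℕ) :
    (1 + t) * rightCore p (t * p) n = rightCore p t n * (1 + t * p ^ n) * p ^ n := by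
  have h := qPoch_succ' (-t) p n
  rw [qPoch_succ, sub_neg_eq_add, neg_mul, neg_mul] at h
  simp only [rightCore, mul_pow]
  linear_combination (-(t ^ n * p ^ n * p ^ pentagonal (n : ℤ) / qPoch (-p) p n)) * h

theorem rightCore_succ (hp : ‖p‖ < 1) (t : ℂ) (n : ℕ) :
    rightCore p t (n + 1) =
      rightCore p t n * (1 + t * p ^ n) * t * p ^ (3 * n + 1) / (1 + p ^ (n + 1)) := by
  have h₁ := qPoch_neg_self_ne_zero hp n
  have h₂ := one_add_pow_succ_ne_zero hp n
  rw [rightCore, rightCore, qPoch_neg_self_succ, qPoch_succ, pentagonal_natCast_succ]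
  field_simp
  ring

theorem rightTerm_add_one_add_mul_rightTerm (hp : ‖p‖ < 1) (t : ℂ) (n : ℕ) :
    rightTerm p t n + (1 + t) * rightTerm p (t * p) n =
      rightCore p t n * (1 + p ^ n) - rightCore p t (n + 1) * (1 + p ^ (n + 1)) := by
  rw [rightTerm, rightTerm, ← mul_assoc, one_add_mul_rightCore, rightCore_succ hp,
    div_mul_cancel₀ _ (one_add_pow_succ_ne_zero hp n)]
  ring

theorem rightFun_eq (hp : ‖p‖ < 1) (t : ℂ) :
    rightFun p t = 2 - (1 + t) * rightFun p (t * p) := by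
  set a : ℕ → ℂ := fun n => rightCore p t n * (1 + p ^ n)
  have ha : Summable a := by
    refine .of_norm_bounded ((summable_norm_rightCore hp t).mul_right 2) fun n => ?_
    rw [norm_mul]
    gcongr
    simpa [one_add_one_eq_two] using norm_one_sub_mul_pow_le (x := -1) hp.le n
  have htel : ∑' n, (rightTerm p t n + (1 + t) * rightTerm p (t * p) n) = 2 := by
    rw [tsum_congr (rightTerm_add_one_add_mul_rightTerm hp t),
      ha.tsum_sub ((summable_nat_add_iff 1).2 ha), ha.tsum_eq_zero_add]
    simp only [a, rightCore_zero, pow_zero, add_sub_cancel_right]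
    norm_num
  rw [(summable_rightTerm hp t).tsum_add ((summable_rightTerm hp _).mul_left _),
    tsum_mul_left] at htel
  rw [rightFun, rightFun]
  linear_combination htel

theorem eq_zero_of_forall_eq_neg_one_add_mul (hp : ‖p‖ < 1) {D : ℂ → ℂ}
    (hD : ∀ t, D t = -(1 + t) * D (t * p)) (hD₀ : ContinuousAt D 0) (t : ℂ) : D t = 0 := by
  have hiter (N : ℕ) : ∀ t, D t = (-1) ^ N * qPoch (-t) p N * D (t * p ^ N) := by
    induction N with
    | zero => simp [qPoch_zero]
    | succ N ih =>
      intro t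
      rw [hD t, ih (t * p), qPoch_succ', pow_succ' p N, ← mul_assoc t, neg_mul t p]
      ring
  have hzero : D 0 = 0 := by
    have h := hD 0
    rw [zero_mul] at h
    linear_combination h / 2
  have hlim : Tendsto (fun N => D (t * p ^ N)) atTop (𝓝 0) := by
    rw [← hzero]
    exact hD₀.tendsto.comp <| by
      simpa using (tendsto_pow_atTop_nhds_zero_of_norm_lt_one hp).const_mul t
  have hbound (N : ℕ) :
      ‖D t‖ ≤ Real.exp (‖t‖ / (1 - ‖p‖)) * ‖D (t * p ^ N)‖ := by
    rw [hiter N t, norm_mul, norm_mul, norm_pow, norm_neg, norm_one, one_pow, one_mul]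
    gcongr
    simpa using norm_qPoch_le_exp (x := -t) hp N
  exact norm_le_zero_iff.1 <| ge_of_tendsto' (by simpa using hlim.norm.const_mul _) hbound

theorem leftFun_eq_rightFun (hp : ‖p‖ < 1) : leftFun p = rightFun p := by
  funext t
  refine sub_eq_zero.1 <| eq_zero_of_forall_eq_neg_one_add_mul hp (D := leftFun p - rightFun p)
    (fun t => ?_) ((continuousAt_leftFun hp).sub (continuousAt_rightFun hp)) t
  simp only [Pi.sub_apply]
  rw [leftFun_eq hp, rightFun_eq hp]
  ring

theorem leftFun_one (hp : ‖p‖ < 1) :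
    leftFun p 1 = 1 - ∑' n : ℕ, (-1) ^ n * p ^ (n + 1).choose 2 / qPoch (-p) p (n + 1) := by
  rw [leftFun, (summable_leftTerm hp 1).tsum_eq_zero_add, leftTerm_zero, sub_eq_add_neg,
    ← tsum_neg]
  congr 1
  refine tsum_congr fun n => ?_
  simp only [leftTerm, one_pow, mul_one, pow_succ]
  ring

theorem rightTerm_one_succ (hp : ‖p‖ < 1) (n : ℕ) :
    rightTerm p 1 (n + 1) = -2 * (p ^ (pentagonal ((n + 1 : ℕ) : ℤ) + (n + 1)) -
      p ^ pentagonal ((n + 1 : ℕ) : ℤ)) := by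
  have h₁ := qPoch_neg_self_ne_zero hp n
  have h₂ := one_add_pow_succ_ne_zero hp n
  have hnum : qPoch (-1) p (n + 1) = 2 * qPoch (-p) p n := by
    rw [qPoch_succ', neg_one_mul, sub_neg_eq_add, one_add_one_eq_two]
  simp only [rightTerm, rightCore, hnum, qPoch_neg_self_succ, one_pow, mul_one]
  field_simp
  ring

theorem rightFun_one (hp : ‖p‖ < 1) :
    rightFun p 1 = -2 * ∑' n : ℕ, (p ^ (pentagonal ((n + 1 : ℕ) : ℤ) + (n + 1)) -
      p ^ pentagonal ((n + 1 : ℕ) : ℤ)) := by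
  rw [rightFun, (summable_rightTerm hp 1).tsum_eq_zero_add, tsum_congr (rightTerm_one_succ hp),
    tsum_mul_left]
  simp [rightTerm, rightCore_zero]

end FalseTheta

/-- False theta function identity \eqref{fth}. -/
theorem stmt_17 (q : ℂ) (hq : ‖q‖ < 1) :
    ∑' n : ℕ, (-1 : ℂ) ^ n * q ^ (n * (n + 1)) / qPoch (-(q ^ 2)) (q ^ 2) (n + 1)
      = 1 + 2 * ∑' n : ℕ,
          (q ^ (3 * (n + 1) ^ 2 + (n + 1)) - q ^ (3 * (n + 1) ^ 2 - (n + 1))) := by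
  have hp : ‖q ^ 2‖ < 1 := by rw [norm_pow]; exact pow_lt_one₀ (norm_nonneg q) hq two_ne_zero
  have hlhs (n : ℕ) : q ^ (n * (n + 1)) = (q ^ 2) ^ (n + 1).choose 2 := by
    rw [← pow_mul, Nat.two_mul_choose_two_succ]
  have hrhs (n : ℕ) : q ^ (3 * (n + 1) ^ 2 + (n + 1)) - q ^ (3 * (n + 1) ^ 2 - (n + 1)) =
      (q ^ 2) ^ (pentagonal ((n + 1 : ℕ) : ℤ) + (n + 1)) -
        (q ^ 2) ^ pentagonal ((n + 1 : ℕ) : ℤ) := by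
    have h := three_mul_sq_sub_eq_two_mul_pentagonal (n + 1)
    have hle : n + 1 ≤ 3 * (n + 1) ^ 2 := by nlinarith
    rw [← pow_mul, ← pow_mul, ← h,
      show 2 * (pentagonal ((n + 1 : ℕ) : ℤ) + (n + 1)) = 3 * (n + 1) ^ 2 + (n + 1) by omega]
  have key := congrFun (FalseTheta.leftFun_eq_rightFun hp) 1
  rw [FalseTheta.leftFun_one hp, FalseTheta.rightFun_one hp] at key
  simp only [hlhs, hrhs]
  linear_combination -key
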